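/- For a fixed shape ρ ⊂ (ℤ₊)^d, the generating function over d-dimensional partitions with shape exactly ρ satisfies: Σ_{π : shape(π) = ρ} ∏_{(i₁,...,i_{d+1}) ∈ Cor(π)} x^{(1)}_{i₁}···x^{(d)}_{i_d} = (∏_{i ∈ Cr(ρ)} x^{(1)}_{i₁}···x^{(d)}_{i_d}) · ∏_{i ∈ ρ} (1 − x^{(1)}_{i₁}···x^{(d)}_{i_d})^{−1}. -/

import Mathlib

open scoped BigOperators

noncomputable section

namespace HDP

variable {d : ℕ}

/-- The step `i → i + e_ℓ` in `ℤ₊^d` (coordinates are 0-based). -/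
def step (i : Fin d → ℕ) (ℓ : Fin d) : Fin d → ℕ := Function.update i ℓ (i ℓ + 1)

/-- `p` is a directed lattice path of length `n` starting at `i`:
each step goes from a point to the point plus a standard basis vector. -/
def IsPathFrom (i : Fin d → ℕ) (n : ℕ) (p : ℕ → Fin d → ℕ) : Prop :=
  p 0 = i ∧ ∀ t < n, ∃ ℓ, p (t + 1) = step (p t) ℓ

/-- The last passage time `G(i)`: the maximum, over directed lattice paths starting
at `i`, of the sum of the entries of `A` along the path. -/
def lpt (A : (Fin d → ℕ) → ℕ) (i : Fin d → ℕ) : ℕ :=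
  sSup {s | ∃ n p, IsPathFrom i n p ∧ s = ∑ t ∈ Finset.range (n + 1), A (p t)}

/-- A `d`-dimensional partition: a finitely supported function `ℤ₊^d → ℕ`
which is weakly decreasing in each coordinate. -/
def IsPartition (π : (Fin d → ℕ) → ℕ) : Prop :=
  (Function.support π).Finite ∧ ∀ i j : Fin d → ℕ, (∀ k, i k ≤ j k) → π j ≤ π i

/-- The set of corners of a `d`-dimensional partition `π` : points `(i, k)` of the
diagram of `π` (i.e. `1 ≤ k ≤ π i`) such that `(i + e ℓ, k)` is not in the diagram
for every `ℓ ∈ [d]`. -/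
def Cor (π : (Fin d → ℕ) → ℕ) : Set ((Fin d → ℕ) × ℕ) :=
  {p | 1 ≤ p.2 ∧ p.2 ≤ π p.1 ∧ ∀ ℓ, π (step p.1 ℓ) < p.2}

/-- The number of corners of `π`. -/
def cor (π : (Fin d → ℕ) → ℕ) : ℕ := Nat.card (Cor π)

/-- The corner-hook volume of `π`: the sum over corners `(i, k)` of
`i₁ + ⋯ + i_d - d + 1` (in 1-based coordinates; with our 0-based
coordinates this cohook length is `(∑ j, i j) + 1`). -/
def chvol (π : (Fin d → ℕ) → ℕ) : ℕ := ∑ᶠ p ∈ Cor π, ((∑ j, p.1 j) + 1)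

/-- A set is down-closed for the componentwise order. -/
def DownClosed (ρ : Set (Fin d → ℕ)) : Prop :=
  ∀ i j : Fin d → ℕ, (∀ k, i k ≤ j k) → j ∈ ρ → i ∈ ρ

/-- The set of top corners of a shape `ρ`. -/
def Cr (ρ : Set (Fin d → ℕ)) : Set (Fin d → ℕ) := {i ∈ ρ | ∀ ℓ, step i ℓ ∉ ρ}

end HDP

open HDP

/-- The product topology on formal power series (coefficientwise convergence). -/
instance mvPowerSeriesTopology (σ : Type*) : TopologicalSpace (MvPowerSeries σ ℚ) :=
  inferInstanceAs (TopologicalSpace ((σ →₀ ℕ) → ℚ))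

/-! The corners of `π` lying above a cell `i` are the `(i, k)` with
`max_ℓ π (i + e_ℓ) < k ≤ π i`, so `π` contributes `∏_i x_i ^ (π i - max_ℓ π (i + e_ℓ))`.
These exponents are `≥ 1` exactly at the top corners of `ρ` and `≥ 0` elsewhere, and `π` is
recovered from them from the top of `ρ` downwards. Hence, after removing one factor `x_i` for each
top corner, partitions of shape `ρ` correspond to arbitrary exponent vectors in `ℕ^ρ`, and the
generating function is `∏_{i ∈ Cr ρ} x_i` times a product of geometric series. -/

namespace MvPowerSeries.WithPiTopology

open scoped MvPowerSeries.WithPiTopology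

variable {σ ι R k : Type*}

theorem summable_of_finite_order_le [Semiring R] [TopologicalSpace R]
    {f : ι → MvPowerSeries σ R} (hf : ∀ n : ℕ, {i | (f i).order ≤ n}.Finite) : Summable f := by
  refine summable_iff_summable_coeff.mpr fun m => summable_of_hasFiniteSupport ?_
  exact (hf (Finsupp.degree m)).subset fun i hi => order_le hi

theorem summable_prod_pow [CommSemiring R] [TopologicalSpace R] [Fintype ι]
    {x : ι → MvPowerSeries σ R} (hx : ∀ i, constantCoeff (x i) = 0) :
    Summable fun c : ι → ℕ => ∏ i, x i ^ c i := by
  refine summable_of_finite_order_le fun n => ?_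
  refine (Set.Finite.pi fun _ => Set.finite_Iic n).subset fun c hc i _ => ?_
  have hsum : ((∑ i, c i : ℕ) : ℕ∞) ≤ n := by
    push_cast
    exact (Finset.sum_le_sum fun i _ => le_order_pow_of_constantCoeff_eq_zero _ (hx i)).trans
      ((le_order_prod _ _).trans hc)
  exact (Finset.single_le_sum (fun j _ => Nat.zero_le (c j)) (Finset.mem_univ i)).trans
    (by exact_mod_cast hsum)

variable [Field k] [TopologicalSpace k] [IsTopologicalRing k] [T3Space k]

theorem hasSum_pow_of_constantCoeff_eq_zero {x : MvPowerSeries σ k} (hx : constantCoeff x = 0) :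
    HasSum (x ^ ·) (1 - x)⁻¹ := by
  have hsum := summable_pow_of_constantCoeff_eq_zero hx
  convert hsum.hasSum
  rw [MvPowerSeries.inv_eq_iff_mul_eq_one (by simp [hx]),
    tsum_pow_mul_one_sub_of_constantCoeff_eq_zero hx]

theorem hasSum_prod_pow_fin {n : ℕ} {x : Fin n → MvPowerSeries σ k}
    (hx : ∀ i, constantCoeff (x i) = 0) :
    HasSum (fun c : Fin n → ℕ => ∏ i, x i ^ c i) (∏ i, (1 - x i)⁻¹) := by
  have : T3Space (MvPowerSeries σ k) := inferInstanceAs (T3Space ((σ →₀ ℕ) → k))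
  induction n with
  | zero => simp
  | succ n ih =>
    have hmul := HasSum.mul (f := (x 0 ^ ·)) (g := fun c : Fin n → ℕ => ∏ i, x i.succ ^ c i)
      (hasSum_pow_of_constantCoeff_eq_zero (hx 0)) (ih fun i => hx i.succ) ?_
    · rw [← (Fin.consEquiv fun _ => ℕ).hasSum_iff, Fin.prod_univ_succ]
      simpa only [Function.comp_def, Fin.prod_univ_succ, Fin.consEquiv_apply, Fin.cons_zero,
        Fin.cons_succ] using hmul
    · have := (Fin.consEquiv fun _ => ℕ).summable_iff.mpr (summable_prod_pow hx)
      simpa only [Function.comp_def, Fin.prod_univ_succ, Fin.consEquiv_apply, Fin.cons_zero,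
        Fin.cons_succ] using this

theorem hasSum_prod_pow [Fintype ι] {x : ι → MvPowerSeries σ k}
    (hx : ∀ i, constantCoeff (x i) = 0) :
    HasSum (fun c : ι → ℕ => ∏ i, x i ^ c i) (∏ i, (1 - x i)⁻¹) := by
  let e := Fintype.equivFin ι
  have h := hasSum_prod_pow_fin (x := x ∘ e.symm) fun i => hx _
  rw [← (e.arrowCongr (Equiv.refl ℕ)).symm.hasSum_iff]
  simpa [Function.comp_def, ← e.symm.prod_comp] using h

end MvPowerSeries.WithPiTopology

theorem finprod_mem_pow_indicator {α M : Type*} [CommMonoid M] {s t : Set α} (hts : t ⊆ s)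
    (x : α → M) : ∏ᶠ i ∈ s, x i ^ t.indicator 1 i = ∏ᶠ i ∈ t, x i := by
  calc ∏ᶠ i ∈ s, x i ^ t.indicator 1 i = ∏ᶠ i ∈ s, t.mulIndicator x i :=
        finprod_mem_congr rfl fun i _ => by by_cases hi : i ∈ t <;> simp [hi]
    _ = ∏ᶠ i ∈ t, x i := by
      rw [finprod_mem_def, Set.mulIndicator_mulIndicator, Set.inter_eq_right.mpr hts,
        ← finprod_mem_def]

namespace HDP

variable {d : ℕ}

theorem lt_step (i : Fin d → ℕ) (ℓ : Fin d) : i < step i ℓ := by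
  simp [step, lt_update_self_iff]

theorem sum_step (i : Fin d → ℕ) (ℓ : Fin d) : ∑ j, step i ℓ j = ∑ j, i j + 1 := by
  rw [step, Finset.sum_update_of_mem (Finset.mem_univ ℓ), Finset.sdiff_singleton_eq_erase,
    ← Finset.add_sum_erase _ _ (Finset.mem_univ ℓ)]
  ring

theorem covBy_iff_exists_step {i j : Fin d → ℕ} : i ⋖ j ↔ ∃ ℓ, j = step i ℓ := by
  simp [Pi.covBy_iff_exists_right_eq, step]

theorem antitone_iff_forall_step_le {β : Type*} [Preorder β] {f : (Fin d → ℕ) → β} :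
    Antitone f ↔ ∀ i ℓ, f (step i ℓ) ≤ f i := by
  rw [antitone_iff_forall_covBy]
  simp [covBy_iff_exists_step]

def succMax (π : (Fin d → ℕ) → ℕ) (i : Fin d → ℕ) : ℕ := Finset.univ.sup fun ℓ => π (step i ℓ)

theorem le_succMax (π : (Fin d → ℕ) → ℕ) (i : Fin d → ℕ) (ℓ : Fin d) :
    π (step i ℓ) ≤ succMax π i :=
  Finset.le_sup (f := fun ℓ => π (step i ℓ)) (Finset.mem_univ ℓ)

theorem succMax_lt_iff {π : (Fin d → ℕ) → ℕ} {i : Fin d → ℕ} {k : ℕ} (hk : 0 < k) :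
    succMax π i < k ↔ ∀ ℓ, π (step i ℓ) < k := by
  simp [succMax, Finset.sup_lt_iff hk]

theorem Cor_eq_biUnion (π : (Fin d → ℕ) → ℕ) :
    Cor π = ⋃ i ∈ Function.support π, Prod.mk i '' Set.Ioc (succMax π i) (π i) := by
  ext ⟨i, k⟩
  simp only [Cor, Set.mem_ofPred_eq, Set.mem_iUnion, Set.mem_image, Set.mem_Ioc, Prod.mk.injEq,
    Function.mem_support, exists_prop]
  constructor
  · rintro ⟨hk, hkπ, hstep⟩
    exact ⟨i, by omega, k, ⟨(succMax_lt_iff hk).mpr hstep, hkπ⟩, rfl, rfl⟩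
  · rintro ⟨i, -, k, ⟨hlt, hkπ⟩, rfl, rfl⟩
    have hk : 0 < k := (Nat.zero_le _).trans_lt hlt
    exact ⟨hk, hkπ, (succMax_lt_iff hk).mp hlt⟩

theorem finprod_mem_Cor {M : Type*} [CommMonoid M] (x : (Fin d → ℕ) → M)
    {π : (Fin d → ℕ) → ℕ} (hπ : (Function.support π).Finite) :
    ∏ᶠ p ∈ Cor π, x p.1 = ∏ᶠ i ∈ Function.support π, x i ^ (π i - succMax π i) := by
  rw [Cor_eq_biUnion, finprod_mem_biUnion _ hπ fun i _ => (Set.finite_Ioc _ _).image _]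
  · refine finprod_mem_congr rfl fun i _ => ?_
    rw [finprod_mem_image (Prod.mk_right_injective i).injOn, ← Finset.coe_Ioc,
      finprod_mem_coe_finset]
    exact (Finset.prod_const (x i)).trans (by rw [Nat.card_Ioc])
  · intro i _ j _ hij
    simp only [Function.onFun, Set.disjoint_left, Set.mem_image]
    rintro _ ⟨k, -, rfl⟩ ⟨k', -, h⟩
    exact hij (congrArg Prod.fst h).symm

variable {ρ : Set (Fin d → ℕ)}

open Classical in
/-- `B` bounds the coordinate sums of the cells of `ρ`; the cut-off `∑ j, i j ≤ B` only serves to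
make the recursion terminate. -/
def fill (ρ : Set (Fin d → ℕ)) (B : ℕ) (w : ρ → ℕ) (i : Fin d → ℕ) : ℕ :=
  if h : i ∈ ρ ∧ ∑ j, i j ≤ B then
    w ⟨i, h.1⟩ + Finset.univ.sup fun ℓ => fill ρ B w (step i ℓ)
  else 0
termination_by B + 1 - ∑ j, i j
decreasing_by rw [sum_step]; omega

section Fill

variable {B : ℕ} {w : ρ → ℕ}

theorem fill_of_notMem {i : Fin d → ℕ} (hi : i ∉ ρ) : fill ρ B w i = 0 := by
  rw [fill, dif_neg (fun h => hi h.1)]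

theorem fill_of_mem (hB : ∀ i ∈ ρ, ∑ j, i j ≤ B) {i : Fin d → ℕ} (hi : i ∈ ρ) :
    fill ρ B w i = w ⟨i, hi⟩ + succMax (fill ρ B w) i := by
  rw [fill, dif_pos ⟨hi, hB i hi⟩, succMax]

theorem antitone_fill (hB : ∀ i ∈ ρ, ∑ j, i j ≤ B) (hρ : DownClosed ρ) :
    Antitone (fill ρ B w) := by
  refine antitone_iff_forall_step_le.mpr fun i ℓ => ?_
  by_cases hi : i ∈ ρ
  · rw [fill_of_mem hB hi (w := w)]
    exact (le_succMax _ i ℓ).trans (Nat.le_add_left _ _)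
  · rw [fill_of_notMem hi, fill_of_notMem fun h => hi (hρ _ _ ((lt_step i ℓ).le) h)]

theorem exists_mem_Cr_le (hfin : ρ.Finite) {i : Fin d → ℕ} (hi : i ∈ ρ) :
    ∃ j ∈ Cr ρ, i ≤ j := by
  obtain ⟨j, hij, hmax⟩ := hfin.exists_le_maximal hi
  refine ⟨j, ⟨hmax.prop, fun ℓ hℓ => ?_⟩, hij⟩
  exact (lt_step j ℓ).not_ge (hmax.2 hℓ (lt_step j ℓ).le)

theorem support_fill (hB : ∀ i ∈ ρ, ∑ j, i j ≤ B) (hfin : ρ.Finite) (hρ : DownClosed ρ)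
    (hw : ∀ i (hi : i ∈ Cr ρ), 0 < w ⟨i, hi.1⟩) : Function.support (fill ρ B w) = ρ := by
  refine Set.Subset.antisymm (fun i hi => ?_) fun i hi => ?_
  · by_contra h
    exact hi (fill_of_notMem h)
  · obtain ⟨j, hj, hij⟩ := exists_mem_Cr_le hfin hi
    have hj_pos : 0 < fill ρ B w j := by
      rw [fill_of_mem hB hj.1]
      exact (hw j hj).trans_le (Nat.le_add_right _ _)
    exact (hj_pos.trans_le (antitone_fill hB hρ hij)).ne'

theorem eq_fill (hB : ∀ i ∈ ρ, ∑ j, i j ≤ B) (hfin : ρ.Finite) {π : (Fin d → ℕ) → ℕ}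
    (hπ₀ : ∀ i ∉ ρ, π i = 0) (hπ : ∀ i (hi : i ∈ ρ), π i = w ⟨i, hi⟩ + succMax π i) :
    π = fill ρ B w := by
  funext i
  by_cases hi : i ∈ ρ
  · refine (hfin.wellFoundedOn (r := (· > ·))).induction hi (P := fun i => π i = fill ρ B w i)
      fun i hi ih => ?_
    rw [hπ i hi, fill_of_mem hB hi]
    congr 1
    refine Finset.sup_congr rfl fun ℓ _ => ?_
    by_cases hℓ : step i ℓ ∈ ρ
    · exact ih _ hℓ (lt_step i ℓ)
    · rw [hπ₀ _ hℓ, fill_of_notMem hℓ]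
  · rw [hπ₀ i hi, fill_of_notMem hi]

end Fill

theorem succMax_add_indicator_le {π : (Fin d → ℕ) → ℕ} (hπ : IsPartition π)
    (hsupp : Function.support π = ρ) {i : Fin d → ℕ} (hi : i ∈ ρ) :
    succMax π i + (Cr ρ).indicator 1 i ≤ π i := by
  have hπi : π i ≠ 0 := Function.mem_support.mp (hsupp.symm ▸ hi)
  by_cases hcr : i ∈ Cr ρ
  · have : succMax π i = 0 := by
      refine Nat.eq_zero_of_le_zero (Finset.sup_le fun ℓ _ => ?_)
      exact (Function.notMem_support.mp (hsupp.symm ▸ hcr.2 ℓ)).le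
    rw [this, Set.indicator_of_mem hcr]
    simpa [Nat.one_le_iff_ne_zero] using hπi
  · rw [Set.indicator_of_notMem hcr, add_zero]
    exact Finset.sup_le fun ℓ _ => hπ.2 _ _ (lt_step i ℓ).le

theorem sum_le_sup_toFinset (hfin : ρ.Finite) {i : Fin d → ℕ} (hi : i ∈ ρ) :
    ∑ j, i j ≤ hfin.toFinset.sup fun i => ∑ j, i j :=
  Finset.le_sup (f := fun i : Fin d → ℕ => ∑ j, i j) (hfin.mem_toFinset.mpr hi)

def shapeEquiv (hfin : ρ.Finite) (hρ : DownClosed ρ) :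
    {π : (Fin d → ℕ) → ℕ // IsPartition π ∧ Function.support π = ρ} ≃ (ρ → ℕ) where
  toFun π i := π.1 i - succMax π.1 i - (Cr ρ).indicator 1 i
  invFun c :=
    have hB := fun _ => sum_le_sup_toFinset hfin
    let w : ρ → ℕ := fun i => c i + (Cr ρ).indicator 1 i
    have hw : ∀ i (hi : i ∈ Cr ρ), 0 < w ⟨i, hi.1⟩ := fun i hi => by
      simp [w, Set.indicator_of_mem hi]
    ⟨fill ρ _ w,
      ⟨(support_fill hB hfin hρ hw).symm ▸ hfin, antitone_fill hB hρ⟩, support_fill hB hfin hρ hw⟩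
  left_inv := by
    rintro ⟨π, hπ, hsupp⟩
    refine Subtype.ext (eq_fill (fun _ => sum_le_sup_toFinset hfin) hfin ?_ fun i hi => ?_).symm
    · intro i hi
      exact Function.notMem_support.mp (hsupp.symm ▸ hi)
    · have := succMax_add_indicator_le hπ hsupp hi
      dsimp only
      omega
  right_inv := by
    intro c
    funext i
    dsimp only
    rw [fill_of_mem (fun _ => sum_le_sup_toFinset hfin) i.2]
    simp

theorem finprod_mem_Cor_eq_mul {M : Type*} [CommMonoid M] (x : (Fin d → ℕ) → M)
    (hfin : ρ.Finite) (hρ : DownClosed ρ) [Fintype ρ]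
    (π : {π : (Fin d → ℕ) → ℕ // IsPartition π ∧ Function.support π = ρ}) :
    ∏ᶠ p ∈ Cor π.1, x p.1 = (∏ᶠ i ∈ Cr ρ, x i) * ∏ i : ρ, x i ^ shapeEquiv hfin hρ π i := by
  obtain ⟨π, hπ, hsupp⟩ := π
  have hexp : ∀ i ∈ ρ, π i - succMax π i = (Cr ρ).indicator 1 i
      + (π i - succMax π i - (Cr ρ).indicator 1 i) := fun i hi => by
    have := succMax_add_indicator_le hπ hsupp hi
    omega
  rw [finprod_mem_Cor x hπ.1, finprod_mem_congr hsupp fun i hi => by rw [hexp i hi, pow_add],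
    finprod_mem_mul_distrib hfin, finprod_mem_pow_indicator (fun _ hi => hi.1),
    ← finprod_set_coe_eq_finprod_mem ρ, finprod_eq_prod_of_fintype (α := ρ)]
  rfl

end HDP

instance (σ : Type*) : IsTopologicalRing (MvPowerSeries σ ℚ) :=
  MvPowerSeries.WithPiTopology.instIsTopologicalRing σ ℚ

instance (σ : Type*) : T2Space (MvPowerSeries σ ℚ) :=
  MvPowerSeries.WithPiTopology.instT2Space

open MvPowerSeries in
/-- Multivariate corner generating function over `d`-dimensional partitions with
shape exactly `ρ`. -/
theorem corner_generating_function_shape_eq {d : ℕ} (ρ : Set (Fin d → ℕ))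
    (hfin : ρ.Finite) (hdown : DownClosed ρ) :
    ∑' π : {π : (Fin d → ℕ) → ℕ // IsPartition π ∧ Function.support π = ρ},
        ∏ᶠ p ∈ Cor π.1, ∏ j : Fin d, (X (j, p.1 j) : MvPowerSeries (Fin d × ℕ) ℚ)
      = (∏ᶠ i ∈ Cr ρ, ∏ j : Fin d, (X (j, i j) : MvPowerSeries (Fin d × ℕ) ℚ)) *
        ∏ i ∈ hfin.toFinset, (1 - ∏ j : Fin d, (X (j, i j) : MvPowerSeries (Fin d × ℕ) ℚ))⁻¹ := by
  let := hfin.fintype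
  set x : (Fin d → ℕ) → MvPowerSeries (Fin d × ℕ) ℚ := fun i => ∏ j : Fin d, X (j, i j)
  rw [tsum_congr (finprod_mem_Cor_eq_mul x hfin hdown), (shapeEquiv hfin hdown).tsum_eq
    fun c => (∏ᶠ i ∈ Cr ρ, x i) * ∏ i : ρ, x i ^ c i]
  by_cases hdeg : d = 0 ∧ ρ.Nonempty
  -- for `d = 0` every cell weight is `1`: the series diverges (so `tsum` is `0`) and `(1 - 1)⁻¹ = 0`
  · obtain ⟨rfl, i₀, hi₀⟩ := hdeg
    have : Nonempty ρ := ⟨⟨i₀, hi₀⟩⟩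
    simp only [x, Fin.prod_univ_zero, one_pow, Finset.prod_const_one, mul_one, tsum_const,
      Nat.card_eq_zero_of_infinite, zero_smul]
    rw [Finset.prod_eq_zero (hfin.mem_toFinset.mpr hi₀) (by simp), mul_zero]
  · have hx : ∀ i : ρ, constantCoeff (x i) = 0 := fun i => by
      have hd : 0 < d := Nat.pos_of_ne_zero fun hd => hdeg ⟨hd, i, i.2⟩
      rw [map_prod]
      exact Finset.prod_eq_zero (Finset.mem_univ (⟨0, hd⟩ : Fin d)) (constantCoeff_X _)
    -- `mvPowerSeriesTopology` is definitionally Mathlib's scoped Pi topology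
    have h : HasSum (fun c : ρ → ℕ => ∏ i : ρ, x i ^ c i) (∏ i : ρ, (1 - x i)⁻¹) :=
      WithPiTopology.hasSum_prod_pow hx
    rw [(h.mul_left _).tsum_eq, Finset.prod_set_coe (f := fun i => (1 - x i)⁻¹)]
    rfl
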